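/- arXiv:2301.02015 — 3 statements merged into one kernel-verified Lean document; each statement's English description precedes it below -/
import Mathlib

section
/- Let υ1, υ2 > 0 with Υ = 1/υ1 + 1/υ2 > 1, let ρ(u1,u2) = |u1|^{υ1} + |u2|^{υ2}, and let L : ℝ²∖{(0,0)} → ℝ be a bounded measurable function. Then for all x1, x2 > 0 the function u = (u1,u2) ↦ |1−e^{i u1 x1}|² · |1−e^{i u2 x2}|² · u1^{−2} · u2^{−2} · |L(u)|/ρ(u) is integrable on ℝ². (This establishes the existence of the well-balanced Gaussian limit field V_{0,1/ρ} defined by the spectral integral with density L/ρ.) -/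
/-!
Weighted AM–GM gives `ρ(u) ≥ (|u₁| |u₂|)^{1/Υ}`, so the integrand is dominated by a constant times
the product `φ₁(u₁) φ₂(u₂)` with `φᵢ(t) = |1 - e^{i t xᵢ}|² / (t² |t|^{1/Υ})`. Since `1/Υ < 1`, each
`φᵢ` is integrable on `ℝ`: near `0` it is `O(|t|^{-1/Υ})`, and at infinity it is `O(t⁻²)`.
-/

open MeasureTheory Real Filter Topology

noncomputable section

/-- `ρ(x₁,x₂) = |x₁|^{υ₁} + |x₂|^{υ₂}`. -/
def rho (v1 v2 : ℝ) (x : ℝ × ℝ) : ℝ := |x.1| ^ v1 + |x.2| ^ v2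

lemma norm_one_sub_exp_I_mul_le_abs (t : ℝ) : ‖1 - Complex.exp (Complex.I * t)‖ ≤ |t| := by
  simpa [norm_sub_rev] using Real.norm_exp_I_mul_ofReal_sub_one_le (x := t)

lemma norm_one_sub_exp_I_mul_le_two (t : ℝ) : ‖1 - Complex.exp (Complex.I * t)‖ ≤ 2 := by
  calc ‖1 - Complex.exp (Complex.I * t)‖ ≤ ‖(1 : ℂ)‖ + ‖Complex.exp (Complex.I * t)‖ :=
        norm_sub_le _ _
    _ = 2 := by rw [mul_comm, Complex.norm_exp_ofReal_mul_I]; norm_num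

lemma integrable_norm_one_sub_exp_sq_div {c : ℝ} (hc0 : 0 < c) (hc1 : c < 1) (x : ℝ) :
    Integrable (fun u : ℝ =>
      ‖1 - Complex.exp (Complex.I * u * x)‖ ^ 2 / (u ^ 2 * |u| ^ c)) := by
  set f : ℝ → ℝ := fun u => ‖1 - Complex.exp (Complex.I * u * x)‖ ^ 2 / (u ^ 2 * |u| ^ c)
  have hf : AEStronglyMeasurable f := by
    refine Measurable.aestronglyMeasurable ?_
    fun_prop
  have hnorm (u : ℝ) :
      ‖f u‖ = ‖1 - Complex.exp (Complex.I * ((u * x : ℝ) : ℂ))‖ ^ 2 / (u ^ 2 * |u| ^ c) := by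
    rw [Real.norm_of_nonneg (by positivity), Complex.ofReal_mul, ← mul_assoc]
  have hnear : IntegrableOn f (Metric.ball 0 1) := by
    refine integrableOn_ball_of_norm_le_rpow (C := x ^ 2) (by simp) (by simpa using hc1)
      (ae_of_all _ fun u => ?_) hf
    rcases eq_or_ne u 0 with rfl | hu
    · simp [f, Real.zero_rpow (neg_ne_zero.2 hc0.ne')]
    have hu' : 0 < |u| := abs_pos.2 hu
    calc ‖f u‖ = _ := hnorm u
      _ ≤ |u * x| ^ 2 / (u ^ 2 * |u| ^ c) := by
          gcongr; exact norm_one_sub_exp_I_mul_le_abs _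
      _ = x ^ 2 * ‖u‖ ^ (-c) := by
          rw [Real.norm_eq_abs, Real.rpow_neg hu'.le, sq_abs]
          field_simp
  have hfar : IntegrableOn f (Metric.ball 0 1)ᶜ := by
    refine (integrable_inv_one_add_sq.const_mul 8).integrableOn.mono' hf.restrict ?_
    filter_upwards [ae_restrict_mem (measurableSet_ball.compl)] with u hu
    have hu1 : 1 ≤ |u| := by simpa using hu
    have hsq : 1 ≤ u ^ 2 := by nlinarith [sq_abs u]
    calc ‖f u‖ = _ := hnorm u
      _ ≤ 2 ^ 2 / (u ^ 2 * 1) := by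
          gcongr
          · exact norm_one_sub_exp_I_mul_le_two _
          · exact Real.one_le_rpow hu1 hc0.le
      _ ≤ 8 * (1 + u ^ 2)⁻¹ := by
          rw [div_le_iff₀ (by positivity)]
          field_simp
          nlinarith
  rw [← integrableOn_univ, ← Set.union_compl_self (Metric.ball (0 : ℝ) 1)]
  exact hnear.union hfar

lemma rpow_mul_rpow_le_rpow_add_rpow {s t p q : ℝ} (hs : 0 ≤ s) (ht : 0 ≤ t) (hp : 0 < p)
    (hq : 0 < q) : s ^ (1 / p + 1 / q)⁻¹ * t ^ (1 / p + 1 / q)⁻¹ ≤ s ^ p + t ^ q := by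
  set S := 1 / p + 1 / q
  have hS : 0 < S := by positivity
  have hw : 1 / p / S + 1 / q / S = 1 := by rw [← add_div, div_self hS.ne']
  have hsp : (s ^ p) ^ (1 / p / S) = s ^ S⁻¹ := by
    rw [← Real.rpow_mul hs]; congr 1; field_simp
  have htq : (t ^ q) ^ (1 / q / S) = t ^ S⁻¹ := by
    rw [← Real.rpow_mul ht]; congr 1; field_simp
  have hamgm := Real.geom_mean_le_arith_mean2_weighted (by positivity) (by positivity)
    (Real.rpow_nonneg hs p) (Real.rpow_nonneg ht q) hw
  rw [hsp, htq] at hamgm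
  refine hamgm.trans (add_le_add ?_ ?_) <;>
    refine mul_le_of_le_one_left (Real.rpow_nonneg (by assumption) _) ?_ <;>
    linarith [div_nonneg (one_div_nonneg.2 hp.le) hS.le, div_nonneg (one_div_nonneg.2 hq.le) hS.le]

theorem stmt9_general (v1 v2 : ℝ) (hv1 : 0 < v1) (hv2 : 0 < v2)
    (hups : 1 < 1 / v1 + 1 / v2)
    (L : ℝ × ℝ → ℝ) (hLmeas : Measurable L)
    (hLbdd : ∃ C : ℝ, ∀ x : ℝ × ℝ, x ≠ 0 → |L x| ≤ C)
    (x1 x2 : ℝ) :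
    Integrable (fun u : ℝ × ℝ =>
      ‖(1 : ℂ) - Complex.exp (Complex.I * (u.1 : ℂ) * (x1 : ℂ))‖ ^ 2 *
        ‖(1 : ℂ) - Complex.exp (Complex.I * (u.2 : ℂ) * (x2 : ℂ))‖ ^ 2 /
          (u.1 ^ 2 * u.2 ^ 2) * (|L u| / rho v1 v2 u)) := by
  obtain ⟨C, hC⟩ := hLbdd
  set c := (1 / v1 + 1 / v2)⁻¹
  have hc0 : 0 < c := by positivity
  have hc1 : c < 1 := inv_lt_one_of_one_lt₀ hups
  have hdom := ((integrable_norm_one_sub_exp_sq_div hc0 hc1 x1).mul_prod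
    (integrable_norm_one_sub_exp_sq_div hc0 hc1 x2)).const_mul C
  rw [← Measure.volume_eq_prod] at hdom
  refine hdom.mono' (Measurable.aestronglyMeasurable (by unfold rho; fun_prop))
    (ae_of_all _ fun u => ?_)
  -- on the axes both sides vanish, since division by zero gives `0`
  rcases eq_or_ne u.1 0 with h1 | h1
  · simp [h1]
  rcases eq_or_ne u.2 0 with h2 | h2
  · simp [h2]
  have hpos : 0 < |u.1| ^ c * |u.2| ^ c := by positivity
  have hρ : |u.1| ^ c * |u.2| ^ c ≤ rho v1 v2 u :=
    rpow_mul_rpow_le_rpow_add_rpow (abs_nonneg _) (abs_nonneg _) hv1 hv2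
  have hLu : |L u| ≤ C := hC u fun h => h1 (by simp [h])
  rw [Real.norm_of_nonneg
    (mul_nonneg (by positivity) (div_nonneg (abs_nonneg _) (hpos.le.trans hρ)))]
  calc _ ≤ ‖(1 : ℂ) - Complex.exp (Complex.I * (u.1 : ℂ) * (x1 : ℂ))‖ ^ 2 *
        ‖(1 : ℂ) - Complex.exp (Complex.I * (u.2 : ℂ) * (x2 : ℂ))‖ ^ 2 /
          (u.1 ^ 2 * u.2 ^ 2) * (C / (|u.1| ^ c * |u.2| ^ c)) := by
        gcongr
        exact (abs_nonneg _).trans hLu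
    _ = _ := by field_simp

theorem stmt9 (v1 v2 : ℝ) (hv1 : 0 < v1) (hv2 : 0 < v2)
    (hups : 1 < 1 / v1 + 1 / v2)
    (L : ℝ × ℝ → ℝ) (hLmeas : Measurable L)
    (hLbdd : ∃ C : ℝ, ∀ x : ℝ × ℝ, x ≠ 0 → |L x| ≤ C)
    (x1 x2 : ℝ) (hx1 : 0 < x1) (hx2 : 0 < x2) :
    Integrable (fun u : ℝ × ℝ =>
      ‖(1 : ℂ) - Complex.exp (Complex.I * (u.1 : ℂ) * (x1 : ℂ))‖ ^ 2 *
        ‖(1 : ℂ) - Complex.exp (Complex.I * (u.2 : ℂ) * (x2 : ℂ))‖ ^ 2 /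
          (u.1 ^ 2 * u.2 ^ 2) * (|L u| / rho v1 v2 u)) :=
  stmt9_general v1 v2 hv1 hv2 hups L hLmeas hLbdd x1 x2
end
end

section
/- For all x, y > 0, as T → ∞, (log T)^{-1} · ∫_0^T Re[(1−e^{i x u})(1−e^{−i y u})] · u^{−1} du converges to 2 if x = y and to 1 if x ≠ y. Equivalently, (log T)^{-1} · ∫_0^T (1 − cos(x u) − cos(y u) + cos((x−y)u)) · u^{−1} du → 1 + 𝟙{x = y}. (The integrand is O(u) near u = 0, so the integral is well defined.) -/
/-!
Expanding the real part, the integrand is `φ_x(u) + φ_y(u) - φ_{x-y}(u)` with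
`φ_a(u) = (1 - cos (a u)) / u`. Each `φ_a` is bounded by `|a|`, so integrable near `0`, and for
`a ≠ 0` its integral over `(1, T)` is `log T - ∫_1^T cos (a t) / t`, where the last integral stays
bounded by integration by parts against the bounded primitive `sin (a t) / a`. Hence
`∫_0^T φ_a = log T + O(1)` for `a ≠ 0`, while `φ_0 = 0`; the limit is `1 + 1 - 𝟙{x ≠ y}`.
-/

open MeasureTheory Real Filter Topology Set intervalIntegral

lemma tendsto_inv_log_mul_of_abs_sub_log_le {g : ℝ → ℝ} {C : ℝ}
    (hg : ∀ᶠ T in atTop, |g T - log T| ≤ C) :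
    Tendsto (fun T => (log T)⁻¹ * g T) atTop (𝓝 1) := by
  have hsmall : Tendsto (fun T => (log T)⁻¹ * (g T - log T)) atTop (𝓝 0) :=
    tendsto_log_atTop.inv_tendsto_atTop.zero_mul_isBoundedUnder_le
      (isBoundedUnder_of_eventually_le (a := C) hg)
  refine (add_zero (1 : ℝ) ▸ hsmall.const_add 1).congr' ?_
  filter_upwards [eventually_gt_atTop 1] with T hT
  have : log T ≠ 0 := (log_pos hT).ne'
  field_simp
  ring

lemma abs_integral_inv_mul_le_of_hasDerivAt {f F : ℝ → ℝ} {M T : ℝ} (hT : 1 ≤ T)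
    (hF : ∀ t, HasDerivAt F (f t) t) (hf : Continuous f) (hM : ∀ t, |F t| ≤ M) :
    |∫ t in (1:ℝ)..T, t⁻¹ * f t| ≤ 2 * M := by
  have hpos : ∀ t ∈ uIcc 1 T, 0 < t := fun t ht => by
    rw [uIcc_of_le hT] at ht; linarith [ht.1]
  have hinv_sq : ContinuousOn (fun t : ℝ => (t ^ 2)⁻¹) (uIcc 1 T) :=
    (continuousOn_pow 2).inv₀ fun t ht => (pow_pos (hpos t ht) 2).ne'
  have hparts := integral_mul_deriv_eq_deriv_mul
    (fun t ht => hasDerivAt_inv (hpos t ht).ne') (fun t _ => hF t)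
    (ContinuousOn.intervalIntegrable hinv_sq.neg) (hf.intervalIntegrable 1 T)
  have hinv_sq_integral : ∫ t in (1:ℝ)..T, M * (t ^ 2)⁻¹ = M * (1 - T⁻¹) := by
    rw [intervalIntegral.integral_const_mul, integral_eq_sub_of_hasDerivAt
      (f := fun t => -t⁻¹) (fun t ht => by simpa using (hasDerivAt_inv (hpos t ht).ne').fun_neg)
      hinv_sq.intervalIntegrable]
    ring
  have hrest : |∫ t in (1:ℝ)..T, -(t ^ 2)⁻¹ * F t| ≤ M * (1 - T⁻¹) := by
    rw [← hinv_sq_integral, ← Real.norm_eq_abs]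
    refine norm_integral_le_of_norm_le hT (Eventually.of_forall fun t ht => ?_)
      (hinv_sq.intervalIntegrable.const_mul M)
    rw [norm_mul, norm_neg, norm_inv, norm_pow, Real.norm_eq_abs t,
      abs_of_pos (by linarith [ht.1] : 0 < t), mul_comm]
    exact mul_le_mul_of_nonneg_right (hM t) (by positivity)
  have hend : |T⁻¹ * F T| ≤ M * T⁻¹ := by
    rw [abs_mul, abs_inv, abs_of_pos (by linarith : (0:ℝ) < T), mul_comm]
    exact mul_le_mul_of_nonneg_right (hM T) (by positivity)
  have hstart : |(1:ℝ)⁻¹ * F 1| ≤ M := by simpa using hM 1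
  rw [hparts]
  calc |T⁻¹ * F T - 1⁻¹ * F 1 - ∫ t in (1:ℝ)..T, -(t ^ 2)⁻¹ * F t|
      ≤ |T⁻¹ * F T| + |(1:ℝ)⁻¹ * F 1| + |∫ t in (1:ℝ)..T, -(t ^ 2)⁻¹ * F t| :=
        (abs_sub _ _).trans (add_le_add_left (abs_sub _ _) _)
    _ ≤ M * T⁻¹ + M + M * (1 - T⁻¹) := by gcongr
    _ = 2 * M := by ring

lemma abs_integral_inv_mul_cos_mul_le {a T : ℝ} (ha : a ≠ 0) (hT : 1 ≤ T) :
    |∫ t in (1:ℝ)..T, t⁻¹ * cos (a * t)| ≤ 2 / |a| := by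
  have hF : ∀ t, HasDerivAt (fun t => sin (a * t) / a) (cos (a * t)) t := fun t => by
    simpa [mul_div_cancel_right₀ _ ha] using (((hasDerivAt_id t).const_mul a).sin).div_const a
  have hM : ∀ t, |sin (a * t) / a| ≤ 1 / |a| := fun t => by
    rw [abs_div]; gcongr; exact abs_sin_le_one _
  simpa [div_eq_mul_inv] using
    abs_integral_inv_mul_le_of_hasDerivAt hT hF (by fun_prop) hM

lemma intervalIntegrable_one_sub_cos_mul_div (a b c : ℝ) :
    IntervalIntegrable (fun u => (1 - cos (a * u)) / u) volume b c := by
  refine (intervalIntegrable_iff.2 <| Measure.integrableOn_of_bounded (M := |a|)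
    ((measure_mono uIoc_subset_uIcc).trans_lt measure_Icc_lt_top).ne
    ((measurable_const.sub (by fun_prop)).div measurable_id).aestronglyMeasurable
    (Eventually.of_forall fun u => ?_))
  rcases eq_or_ne u 0 with rfl | hu
  · simp
  rw [norm_div, div_le_iff₀ (norm_pos_iff.2 hu), Real.norm_eq_abs, Real.norm_eq_abs,
    ← abs_mul, ← cos_zero]
  simpa using abs_cos_sub_cos_le 0 (a * u)

lemma tendsto_inv_log_mul_integral_one_sub_cos_mul_div {a : ℝ} (ha : a ≠ 0) :
    Tendsto (fun T => (log T)⁻¹ * ∫ u in (0:ℝ)..T, (1 - cos (a * u)) / u) atTop (𝓝 1) := by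
  set C := ∫ u in (0:ℝ)..1, (1 - cos (a * u)) / u
  refine tendsto_inv_log_mul_of_abs_sub_log_le (C := |C| + 2 / |a|) ?_
  filter_upwards [eventually_ge_atTop 1] with T hT
  have hinv : IntervalIntegrable (fun u : ℝ => u⁻¹) volume 1 T :=
    intervalIntegrable_inv (fun u hu => by
      rw [uIcc_of_le hT] at hu; linarith [hu.1]) continuousOn_id
  have hsplit : ∫ u in (0:ℝ)..T, (1 - cos (a * u)) / u
      = C + (log T - ∫ t in (1:ℝ)..T, t⁻¹ * cos (a * t)) := by
    rw [← integral_add_adjacent_intervals (intervalIntegrable_one_sub_cos_mul_div a 0 1)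
      (intervalIntegrable_one_sub_cos_mul_div a 1 T)]
    have hlog : ∫ u in (1:ℝ)..T, u⁻¹ = log T := by
      rw [integral_inv_of_pos one_pos (by linarith), div_one]
    rw [← hlog, ← intervalIntegral.integral_sub hinv (hinv.mul_continuousOn (by fun_prop))]
    exact congrArg (C + ·) (integral_congr fun u _ => by ring)
  rw [hsplit, show C + (log T - _) - log T = C - ∫ t in (1:ℝ)..T, t⁻¹ * cos (a * t) by ring]
  exact (abs_sub _ _).trans (add_le_add le_rfl (abs_integral_inv_mul_cos_mul_le ha hT))

lemma re_one_sub_exp_mul_one_sub_exp (x y u : ℝ) :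
    ((1 - Complex.exp (Complex.I * x * u)) * (1 - Complex.exp (-Complex.I * y * u))).re
      = (1 - cos (x * u)) + (1 - cos (y * u)) - (1 - cos ((x - y) * u)) := by
  simp [Complex.mul_re, Complex.exp_re, Complex.exp_im, cos_sub, sub_mul]
  ring

theorem stmt15 (x y : ℝ) (hx : 0 < x) (hy : 0 < y) :
    Filter.Tendsto
      (fun T : ℝ => (Real.log T)⁻¹ *
        ∫ u in (0 : ℝ)..T,
          ((1 - Complex.exp (Complex.I * (x : ℂ) * (u : ℂ))) *
            (1 - Complex.exp (-Complex.I * (y : ℂ) * (u : ℂ)))).re / u)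
      Filter.atTop
      (𝓝 (if x = y then (2 : ℝ) else 1)) := by
  have hdiff : Tendsto (fun T => (log T)⁻¹ * ∫ u in (0:ℝ)..T, (1 - cos ((x - y) * u)) / u)
      atTop (𝓝 (if x = y then 0 else 1)) := by
    split_ifs with hxy
    · simp [hxy]
    · exact tendsto_inv_log_mul_integral_one_sub_cos_mul_div (sub_ne_zero.2 hxy)
  have hlim := ((tendsto_inv_log_mul_integral_one_sub_cos_mul_div hx.ne').add
    (tendsto_inv_log_mul_integral_one_sub_cos_mul_div hy.ne')).sub hdiff
  rw [show (1 + 1 - if x = y then 0 else 1 : ℝ) = if x = y then 2 else 1 by split_ifs <;> norm_num]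
    at hlim
  refine hlim.congr fun T => Eq.symm ?_
  have hI (a : ℝ) := intervalIntegrable_one_sub_cos_mul_div a 0 T
  rw [integral_congr (g := fun u => (1 - cos (x * u)) / u + (1 - cos (y * u)) / u
      - (1 - cos ((x - y) * u)) / u) fun u _ => by rw [re_one_sub_exp_mul_one_sub_exp]; ring,
    intervalIntegral.integral_sub ((hI x).add (hI y)) (hI _),
    intervalIntegral.integral_add (hI x) (hI y)]
  ring
end

section
/- Let υ1, υ2 > 0, ρ(x1,x2) = |x1|^{υ1} + |x2|^{υ2}, Υ = 1/υ1 + 1/υ2, and let δ > 0 and w > 0. Then ∫_{{x ∈ ℝ² : |x1|+|x2| < δ}} ρ(x)^{−w} dx < ∞ if and only if w < Υ. -/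
/-! `ρ` is quasi-homogeneous, `ρ (t ^ (1/υ₁) * x₁, t ^ (1/υ₂) * x₂) = t * ρ x`, so the sublevel set
`{ρ < t}` has area `C * t ^ Υ` with `0 < C < ∞`. By the layer-cake formula the integral of `ρ ^ (-w)`
over `{ρ < ε}` is a finite term plus `C * ∫_a^∞ s ^ (-Υ / w) ds`, which is finite iff `Υ / w > 1`.
The domain `{|x₁| + |x₂| < δ}` lies between two sublevel sets of `ρ`. -/

open MeasureTheory Real Filter Topology

noncomputable section

open Set
open scoped ENNReal

lemma volume_preimage_mul_prodMap_mul {a b : ℝ} (ha : a ≠ 0) (hb : b ≠ 0) (s : Set (ℝ × ℝ)) :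
    volume ((fun x : ℝ × ℝ => (a * x.1, b * x.2)) ⁻¹' s) =
      ENNReal.ofReal |a * b|⁻¹ * volume s := by
  have hdet : ((LinearMap.mulLeft ℝ a).prodMap (LinearMap.mulLeft ℝ b)).det = a * b := by
    rw [LinearMap.det_prodMap, LinearMap.det_mulLeft, LinearMap.det_mulLeft]
  have := Measure.addHaar_preimage_linearMap (volume : Measure (ℝ × ℝ))
    (f := (LinearMap.mulLeft ℝ a).prodMap (LinearMap.mulLeft ℝ b))
    (by rw [hdet]; exact mul_ne_zero ha hb) s
  rwa [hdet, abs_inv] at this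

lemma lintegral_Ioi_rpow_ne_top_iff {a s : ℝ} (ha : 0 < a) :
    ∫⁻ t in Ioi a, ENNReal.ofReal (t ^ s) ≠ ∞ ↔ s < -1 := by
  rw [lintegral_ofReal_ne_top_iff_integrable (by fun_prop), ← IntegrableOn,
    integrableOn_Ioi_rpow_iff ha]
  filter_upwards [ae_restrict_mem measurableSet_Ioi] with t ht
  exact rpow_nonneg (ha.trans ht).le s

-- `0 ^ (-w) = 0` in Lean, hence the condition `0 < r`.
lemma lt_rpow_neg_iff {r t w : ℝ} (hr : 0 ≤ r) (ht : 0 < t) (hw : 0 < w) :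
    t < r ^ (-w) ↔ 0 < r ∧ r < t ^ (-w⁻¹) := by
  rcases hr.eq_or_lt with rfl | hr
  · simp [zero_rpow (neg_ne_zero.2 hw.ne'), ht.le]
  · rw [rpow_neg hr.le, rpow_neg ht.le, ← inv_rpow ht.le, lt_inv_comm₀ ht (rpow_pos_of_pos hr w),
      lt_rpow_inv_iff_of_pos hr.le (inv_nonneg.2 ht.le) hw]
    simp [hr]

section rho

variable {v1 v2 : ℝ}

lemma rpow_abs_fst_le_rho (x : ℝ × ℝ) : |x.1| ^ v1 ≤ rho v1 v2 x :=
  le_add_of_nonneg_right (rpow_nonneg (abs_nonneg _) _)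

lemma rpow_abs_snd_le_rho (x : ℝ × ℝ) : |x.2| ^ v2 ≤ rho v1 v2 x :=
  le_add_of_nonneg_left (rpow_nonneg (abs_nonneg _) _)

lemma rho_nonneg (x : ℝ × ℝ) : 0 ≤ rho v1 v2 x :=
  (rpow_nonneg (abs_nonneg _) _).trans (rpow_abs_fst_le_rho x)

lemma rho_pos {x : ℝ × ℝ} (hx : x ≠ 0) : 0 < rho v1 v2 x := by
  obtain h | h : x.1 ≠ 0 ∨ x.2 ≠ 0 := by
    contrapose! hx
    exact Prod.ext hx.1 hx.2
  · exact (rpow_pos_of_pos (abs_pos.2 h) v1).trans_le (rpow_abs_fst_le_rho x)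
  · exact (rpow_pos_of_pos (abs_pos.2 h) v2).trans_le (rpow_abs_snd_le_rho x)

lemma measurable_rho : Measurable (rho v1 v2) := by
  unfold rho
  fun_prop

lemma continuous_rho (hv1 : 0 < v1) (hv2 : 0 < v2) : Continuous (rho v1 v2) := by
  unfold rho
  have := continuous_rpow_const hv1.le
  have := continuous_rpow_const hv2.le
  fun_prop

lemma rho_zero (hv1 : 0 < v1) (hv2 : 0 < v2) : rho v1 v2 0 = 0 := by
  simp [rho, zero_rpow hv1.ne', zero_rpow hv2.ne']

lemma rho_rpow_inv_mul (hv1 : 0 < v1) (hv2 : 0 < v2) {t : ℝ} (ht : 0 < t) (x : ℝ × ℝ) :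
    rho v1 v2 (t ^ v1⁻¹ * x.1, t ^ v2⁻¹ * x.2) = t * rho v1 v2 x := by
  have scale : ∀ {v : ℝ}, 0 < v → ∀ y : ℝ, |t ^ v⁻¹ * y| ^ v = t * |y| ^ v := fun hv y => by
    rw [abs_mul, abs_of_pos (rpow_pos_of_pos ht _), mul_rpow (rpow_nonneg ht.le _) (abs_nonneg y),
      rpow_inv_rpow ht.le hv.ne']
  simp only [rho, scale hv1, scale hv2, mul_add]

lemma volume_rho_lt (hv1 : 0 < v1) (hv2 : 0 < v2) {t : ℝ} (ht : 0 < t) :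
    volume {x | rho v1 v2 x < t} =
      ENNReal.ofReal (t ^ (v1⁻¹ + v2⁻¹)) * volume {x | rho v1 v2 x < 1} := by
  have hs : 0 < t⁻¹ := inv_pos.2 ht
  have hpre : {x | rho v1 v2 x < t} =
      (fun x : ℝ × ℝ => (t⁻¹ ^ v1⁻¹ * x.1, t⁻¹ ^ v2⁻¹ * x.2)) ⁻¹' {x | rho v1 v2 x < 1} := by
    ext x
    simp only [mem_ofPred_eq, mem_preimage, rho_rpow_inv_mul hv1 hv2 hs, inv_mul_lt_one₀ ht]
  rw [hpre, volume_preimage_mul_prodMap_mul (rpow_pos_of_pos hs _).ne' (rpow_pos_of_pos hs _).ne',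
    ← rpow_add hs, abs_of_pos (rpow_pos_of_pos hs _), inv_rpow ht.le, inv_inv]

lemma volume_rho_lt_one_pos (hv1 : 0 < v1) (hv2 : 0 < v2) : 0 < volume {x | rho v1 v2 x < 1} :=
  (isOpen_lt (continuous_rho hv1 hv2) continuous_const).measure_pos _
    ⟨0, by simp [rho_zero hv1 hv2]⟩

lemma volume_rho_lt_one_lt_top (hv1 : 0 < v1) (hv2 : 0 < v2) :
    volume {x | rho v1 v2 x < 1} < ∞ := by
  have hbox : IsCompact (Icc (-1 : ℝ) 1 ×ˢ Icc (-1 : ℝ) 1) := isCompact_Icc.prod isCompact_Icc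
  refine (hbox.isBounded.subset ?_).measure_lt_top
  intro x (hx : rho v1 v2 x < 1)
  have h1 := (rpow_lt_one_iff' (abs_nonneg x.1) hv1).1 ((rpow_abs_fst_le_rho x).trans_lt hx)
  have h2 := (rpow_lt_one_iff' (abs_nonneg x.2) hv2).1 ((rpow_abs_snd_le_rho x).trans_lt hx)
  exact ⟨abs_le.1 h1.le, abs_le.1 h2.le⟩

lemma volume_compl_setOf_rho_pos : volume {x : ℝ × ℝ | 0 < rho v1 v2 x}ᶜ = 0 :=
  measure_mono_null (fun _ hx => by_contra fun h => hx (rho_pos h)) (measure_singleton 0)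

lemma setLIntegral_rho_lt_rpow_neg {w : ℝ} (hw : 0 < w) (ε : ℝ) :
    ∫⁻ x in {x | rho v1 v2 x < ε}, ENNReal.ofReal (rho v1 v2 x ^ (-w)) =
      ∫⁻ t in Ioi 0, volume {x | rho v1 v2 x < min ε (t ^ (-w⁻¹))} := by
  have hmeas : Measurable fun x => rho v1 v2 x ^ (-w) := measurable_rho.pow_const _
  rw [lintegral_eq_lintegral_meas_lt _ (ae_of_all _ fun x => rpow_nonneg (rho_nonneg x) _)
    hmeas.aemeasurable]
  refine setLIntegral_congr_fun measurableSet_Ioi fun t (ht : 0 < t) => ?_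
  have hset : {x | t < rho v1 v2 x ^ (-w)} ∩ {x | rho v1 v2 x < ε} =
      {x | rho v1 v2 x < min ε (t ^ (-w⁻¹))} ∩ {x | 0 < rho v1 v2 x} := by
    ext x
    simp only [mem_inter_iff, mem_ofPred_eq, lt_rpow_neg_iff (rho_nonneg x) ht hw, lt_min_iff]
    tauto
  rw [Measure.restrict_apply' (measurableSet_lt measurable_rho measurable_const), hset,
    measure_inter_conull volume_compl_setOf_rho_pos]

lemma setLIntegral_rho_lt_rpow_neg_ne_top_iff (hv1 : 0 < v1) (hv2 : 0 < v2) {w ε : ℝ}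
    (hw : 0 < w) (hε : 0 < ε) :
    ∫⁻ x in {x | rho v1 v2 x < ε}, ENNReal.ofReal (rho v1 v2 x ^ (-w)) ≠ ∞ ↔
      w < v1⁻¹ + v2⁻¹ := by
  set C := volume {x | rho v1 v2 x < 1}
  have hC0 : C ≠ 0 := (volume_rho_lt_one_pos hv1 hv2).ne'
  have hCtop : C ≠ ∞ := (volume_rho_lt_one_lt_top hv1 hv2).ne
  -- past `a`, `min ε (t ^ (-w⁻¹))` switches from `ε` to `t ^ (-w⁻¹)`
  set a := ε ^ (-w)
  have ha : 0 < a := rpow_pos_of_pos hε _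
  have hmono : ∀ {s t : ℝ}, 0 < s → s ≤ t → t ^ (-w⁻¹) ≤ s ^ (-w⁻¹) := fun hs hst =>
    rpow_le_rpow_of_nonpos hs hst (neg_nonpos.2 (inv_pos.2 hw).le)
  have ha_rpow : a ^ (-w⁻¹) = ε := by
    rw [← rpow_mul hε.le, neg_mul_neg, mul_inv_cancel₀ hw.ne', Real.rpow_one]
  have hnear : ∫⁻ t in Ioc 0 a, volume {x | rho v1 v2 x < min ε (t ^ (-w⁻¹))} =
      volume {x | rho v1 v2 x < ε} * ENNReal.ofReal a := by
    rw [setLIntegral_congr_fun measurableSet_Ioc fun t (ht : t ∈ Ioc 0 a) => by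
        rw [min_eq_left (ha_rpow ▸ hmono ht.1 ht.2)],
      setLIntegral_const, Real.volume_Ioc, sub_zero]
  have htail : ∫⁻ t in Ioi a, volume {x | rho v1 v2 x < min ε (t ^ (-w⁻¹))} =
      C * ∫⁻ t in Ioi a, ENNReal.ofReal (t ^ (-(w⁻¹ * (v1⁻¹ + v2⁻¹)))) := by
    rw [← lintegral_const_mul' C _ hCtop]
    refine setLIntegral_congr_fun measurableSet_Ioi fun t (ht : a < t) => ?_
    have ht0 : 0 < t := ha.trans ht
    rw [min_eq_right (ha_rpow ▸ hmono ha ht.le), volume_rho_lt hv1 hv2 (rpow_pos_of_pos ht0 _),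
      ← rpow_mul ht0.le, neg_mul, mul_comm]
  have hnear_ne_top : volume {x | rho v1 v2 x < ε} * ENNReal.ofReal a ≠ ∞ := by
    rw [volume_rho_lt hv1 hv2 hε]
    exact ENNReal.mul_ne_top (ENNReal.mul_ne_top ENNReal.ofReal_ne_top hCtop) ENNReal.ofReal_ne_top
  have htail_ne_top {J : ℝ≥0∞} : C * J ≠ ∞ ↔ J ≠ ∞ :=
    ⟨fun h => (ENNReal.lt_top_of_mul_ne_top_right h hC0).ne, ENNReal.mul_ne_top hCtop⟩
  rw [setLIntegral_rho_lt_rpow_neg hw, ← Ioc_union_Ioi_eq_Ioi ha.le,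
    lintegral_union measurableSet_Ioi Ioc_disjoint_Ioi_same, hnear, htail, ENNReal.add_ne_top,
    htail_ne_top, lintegral_Ioi_rpow_ne_top_iff ha, neg_lt_neg_iff, inv_mul_eq_div, one_lt_div hw]
  exact and_iff_right hnear_ne_top

lemma integrableOn_rho_lt_rpow_neg_iff (hv1 : 0 < v1) (hv2 : 0 < v2) {w ε : ℝ}
    (hw : 0 < w) (hε : 0 < ε) :
    IntegrableOn (fun x => rho v1 v2 x ^ (-w)) {x | rho v1 v2 x < ε} ↔ w < v1⁻¹ + v2⁻¹ := by
  rw [← setLIntegral_rho_lt_rpow_neg_ne_top_iff hv1 hv2 hw hε, IntegrableOn,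
    lintegral_ofReal_ne_top_iff_integrable (measurable_rho.pow_const _).aestronglyMeasurable
      (ae_of_all _ fun x => rpow_nonneg (rho_nonneg x) _)]

lemma rho_lt_of_abs_add_abs_lt (hv1 : 0 < v1) (hv2 : 0 < v2) {δ : ℝ} {x : ℝ × ℝ}
    (hx : |x.1| + |x.2| < δ) : rho v1 v2 x < δ ^ v1 + δ ^ v2 := by
  have h1 : |x.1| < δ := by linarith [abs_nonneg x.2]
  have h2 : |x.2| < δ := by linarith [abs_nonneg x.1]
  exact add_lt_add (rpow_lt_rpow (abs_nonneg _) h1 hv1) (rpow_lt_rpow (abs_nonneg _) h2 hv2)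

lemma exists_rho_lt_subset_abs_add_abs_lt (hv1 : 0 < v1) (hv2 : 0 < v2) {δ : ℝ} (hδ : 0 < δ) :
    ∃ ε > 0, {x | rho v1 v2 x < ε} ⊆ {x : ℝ × ℝ | |x.1| + |x.2| < δ} := by
  have hδ2 : 0 < δ / 2 := half_pos hδ
  refine ⟨min ((δ / 2) ^ v1) ((δ / 2) ^ v2), lt_min (rpow_pos_of_pos hδ2 _) (rpow_pos_of_pos hδ2 _),
    fun x (hx : rho v1 v2 x < _) => ?_⟩
  have h1 : |x.1| < δ / 2 := (rpow_lt_rpow_iff (abs_nonneg _) hδ2.le hv1).1 <|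
    ((rpow_abs_fst_le_rho x).trans_lt hx).trans_le (min_le_left _ _)
  have h2 : |x.2| < δ / 2 := (rpow_lt_rpow_iff (abs_nonneg _) hδ2.le hv2).1 <|
    ((rpow_abs_snd_le_rho x).trans_lt hx).trans_le (min_le_right _ _)
  show |x.1| + |x.2| < δ
  linarith

end rho

theorem stmt17 (v1 v2 δ w : ℝ) (hv1 : 0 < v1) (hv2 : 0 < v2) (hδ : 0 < δ) (hw : 0 < w) :
    IntegrableOn (fun x : ℝ × ℝ => rho v1 v2 x ^ (-w))
        {x : ℝ × ℝ | |x.1| + |x.2| < δ} ↔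
      w < 1 / v1 + 1 / v2 := by
  obtain ⟨ε, hε, hsub⟩ := exists_rho_lt_subset_abs_add_abs_lt hv1 hv2 hδ
  have hM : 0 < δ ^ v1 + δ ^ v2 := add_pos (rpow_pos_of_pos hδ _) (rpow_pos_of_pos hδ _)
  rw [one_div, one_div]
  constructor
  · exact fun h => (integrableOn_rho_lt_rpow_neg_iff hv1 hv2 hw hε).1 (h.mono_set hsub)
  · exact fun h => ((integrableOn_rho_lt_rpow_neg_iff hv1 hv2 hw hM).2 h).mono_set
      fun x => rho_lt_of_abs_add_abs_lt hv1 hv2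
end
end
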